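/- arXiv:1205.2171 — 2 statements merged into one kernel-verified Lean document; each statement's English description precedes it below -/
import Mathlib

section
/- Let H_X and H_Y be real Hilbert spaces, w_1, …, w_n ∈ H_X with Gram matrix k (k_{ij} = ⟨w_i, w_j⟩), u_1, …, u_n ∈ H_Y with Gram matrix L (L_{ij} = ⟨u_i, u_j⟩), and ε > 0. Let D := Ĉ_YY − Ĉ_YX ∘ (Ĉ_XX + ε·Id)^{-1} ∘ Ĉ_XY be the regularized empirical conditional covariance operator on H_Y. Then for every φ ∈ H_Y, writing b ∈ ℝ^n for the vector with b_p = ⟨u_p, φ⟩, one has D φ = (1/n) Σ_{p=1}^n (b − (k + nε·I_n)^{-1} k b)_p u_p. In particular, ⟨u_i, D u_j⟩ = (1/n) (L T)_{ij} where T := L − (k + nε·I_n)^{-1} k L. -/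
open scoped RealInnerProductSpace BigOperators

/-!
Write `G = gram ℝ w`. For `ψ = (1/n) Σ_q b_q w_q`, pairing the equation
`(Ĉ_XX + ε Id) x = ψ` with each `w_i` and multiplying by `n` shows that the coordinates
`c_p = ⟪w_p, x⟫` of `x = (Ĉ_XX + ε Id)⁻¹ ψ` solve `(G + nε I) c = G b`; the matrix `G + nε I`
is positive definite, so `c = (G + nε I)⁻¹ G b`. Substituting into `Ĉ_YX x = (1/n) Σ_p c_p u_p`
gives the formula for `D φ`; pairing it with `u_i` turns each sum `Σ_p v_p ⟪u_i, u_p⟫` into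
`(L v)_i`, and `⟪u_q, u_j⟫` is the `j`-th column of `L`.
-/

open Matrix

section Gram

variable {ι E : Type*} [Fintype ι] [NormedAddCommGroup E] [InnerProductSpace ℝ E]

theorem Matrix.posDef_gram_add_smul_one [DecidableEq ι] (w : ι → E) {c : ℝ} (hc : 0 < c) :
    (gram ℝ w + c • 1).PosDef :=
  PosDef.posSemidef_add (posSemidef_gram ℝ w) (PosDef.one.smul hc)

theorem inner_sum_smul_eq_gram_mulVec (w : ι → E) (b : ι → ℝ) (i : ι) :
    ⟪w i, ∑ p, b p • w p⟫ = (gram ℝ w *ᵥ b) i := by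
  simp only [inner_sum, real_inner_smul_right, mulVec, dotProduct, gram_apply, mul_comm]

theorem inner_eq_inv_mulVec_of_sum_inner_smul_add_smul_eq [DecidableEq ι] (w : ι → E) {c : ℝ}
    (hc : 0 < c) {x : E} {b : ι → ℝ}
    (hx : ∑ p, ⟪w p, x⟫ • w p + c • x = ∑ p, b p • w p) :
    (fun p => ⟪w p, x⟫) = (gram ℝ w + c • 1)⁻¹ *ᵥ (gram ℝ w *ᵥ b) := by
  have := (posDef_gram_add_smul_one w hc).isUnit.invertible
  refine (inv_mulVec_eq_vec (funext fun i => ?_)).symm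
  have h := congrArg (fun z => ⟪w i, z⟫) hx
  simp only [inner_add_right, real_inner_smul_right, inner_sum_smul_eq_gram_mulVec] at h
  simp only [add_mulVec, smul_mulVec, one_mulVec, Pi.add_apply, Pi.smul_apply, smul_eq_mul]
  linarith

end Gram

theorem conditional_covariance_gram_expression_general
    {HX HY : Type*} [NormedAddCommGroup HX] [InnerProductSpace ℝ HX]
    [NormedAddCommGroup HY] [InnerProductSpace ℝ HY]
    (n : ℕ) (hn : 0 < n) (w : Fin n → HX) (u : Fin n → HY)
    (k : Matrix (Fin n) (Fin n) ℝ) (hk : ∀ i j, k i j = ⟪w i, w j⟫)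
    (L : Matrix (Fin n) (Fin n) ℝ) (hL : ∀ i j, L i j = ⟪u i, u j⟫)
    (ε : ℝ) (hε : 0 < ε)
    -- `R` is the inverse of the regularized covariance operator `Ĉ_XX + ε Id`:
    (R : HX → HX)
    (hR1 : ∀ φ : HX, ((1 / (n : ℝ)) • ∑ p, ⟪w p, R φ⟫ • w p) + ε • R φ = φ)
    -- `D = Ĉ_YY − Ĉ_YX ∘ R ∘ Ĉ_XY`:
    (D : HY → HY)
    (hD : ∀ φ : HY,
      D φ = (1 / (n : ℝ)) • ∑ p, ⟪u p, φ⟫ • u p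
        - (1 / (n : ℝ)) •
            ∑ p, ⟪w p, R ((1 / (n : ℝ)) • ∑ q, ⟪u q, φ⟫ • w q)⟫ • u p) :
    (∀ φ : HY,
      D φ = (1 / (n : ℝ)) •
        ∑ p, (((fun q => ⟪u q, φ⟫)
          - (k + ((n : ℝ) * ε) • 1)⁻¹.mulVec (k.mulVec fun q => ⟪u q, φ⟫)) p) • u p) ∧
    ∀ i j, ⟪u i, D (u j)⟫
      = (1 / (n : ℝ)) * (L * (L - (k + ((n : ℝ) * ε) • 1)⁻¹ * k * L)) i j := by
  obtain rfl : k = gram ℝ w := Matrix.ext hk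
  obtain rfl : L = gram ℝ u := Matrix.ext hL
  have hn' : (n : ℝ) ≠ 0 := Nat.cast_ne_zero.mpr hn.ne'
  have hR : ∀ b : Fin n → ℝ, ∑ p, ⟪w p, R ((1 / (n : ℝ)) • ∑ q, b q • w q)⟫ • w p
      + ((n : ℝ) * ε) • R ((1 / (n : ℝ)) • ∑ q, b q • w q) = ∑ q, b q • w q := fun b => by
    simpa [smul_add, smul_smul, hn'] using
      congrArg ((n : ℝ) • ·) (hR1 ((1 / (n : ℝ)) • ∑ q, b q • w q))
  have hDφ : ∀ φ : HY, D φ = (1 / (n : ℝ)) •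
      ∑ p, (((fun q => ⟪u q, φ⟫)
        - (gram ℝ w + ((n : ℝ) * ε) • 1)⁻¹.mulVec ((gram ℝ w).mulVec fun q => ⟪u q, φ⟫)) p)
        • u p := by
    intro φ
    rw [← inner_eq_inv_mulVec_of_sum_inner_smul_add_smul_eq w (by positivity) (hR _), hD,
      ← smul_sub, ← Finset.sum_sub_distrib]
    simp only [Pi.sub_apply, sub_smul]
  refine ⟨hDφ, fun i j => ?_⟩
  have hcol : (fun q => ⟪u q, u j⟫) = gram ℝ u *ᵥ Pi.single j 1 := by
    rw [mulVec_single_one]; rfl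
  rw [hDφ, real_inner_smul_right, inner_sum_smul_eq_gram_mulVec, hcol]
  congr 1
  simp only [mulVec_mulVec]
  rw [← sub_mulVec, mulVec_mulVec, mulVec_single_one, col_apply, Matrix.mul_assoc _ (gram ℝ w)]

/-- Gram matrix expression of the regularized empirical conditional
covariance operator `D = Ĉ_YY − Ĉ_YX ∘ (Ĉ_XX + ε Id)⁻¹ ∘ Ĉ_XY`:
for every `φ`, with `b = (⟪uₚ, φ⟫)ₚ`,
`D φ = (1/n) Σₚ (b − (k + nε Iₙ)⁻¹ k b)ₚ uₚ`, and in particular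
`⟪uᵢ, D uⱼ⟫ = (1/n) (L T)ᵢⱼ` where `T = L − (k + nε Iₙ)⁻¹ k L`. -/
theorem conditional_covariance_gram_expression
    {HX HY : Type*} [NormedAddCommGroup HX] [InnerProductSpace ℝ HX]
    [NormedAddCommGroup HY] [InnerProductSpace ℝ HY]
    (n : ℕ) (hn : 0 < n) (w : Fin n → HX) (u : Fin n → HY)
    (k : Matrix (Fin n) (Fin n) ℝ) (hk : ∀ i j, k i j = ⟪w i, w j⟫)
    (L : Matrix (Fin n) (Fin n) ℝ) (hL : ∀ i j, L i j = ⟪u i, u j⟫)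
    (ε : ℝ) (hε : 0 < ε)
    -- `R` is the inverse of the regularized covariance operator `Ĉ_XX + ε Id`:
    (R : HX → HX)
    (hR1 : ∀ φ : HX, ((1 / (n : ℝ)) • ∑ p, ⟪w p, R φ⟫ • w p) + ε • R φ = φ)
    (hR2 : ∀ φ : HX, R (((1 / (n : ℝ)) • ∑ p, ⟪w p, φ⟫ • w p) + ε • φ) = φ)
    -- `D = Ĉ_YY − Ĉ_YX ∘ R ∘ Ĉ_XY`:
    (D : HY → HY)
    (hD : ∀ φ : HY,
      D φ = (1 / (n : ℝ)) • ∑ p, ⟪u p, φ⟫ • u p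
        - (1 / (n : ℝ)) •
            ∑ p, ⟪w p, R ((1 / (n : ℝ)) • ∑ q, ⟪u q, φ⟫ • w q)⟫ • u p) :
    (∀ φ : HY,
      D φ = (1 / (n : ℝ)) •
        ∑ p, (((fun q => ⟪u q, φ⟫)
          - (k + ((n : ℝ) * ε) • 1)⁻¹.mulVec (k.mulVec fun q => ⟪u q, φ⟫)) p) • u p) ∧
    ∀ i j, ⟪u i, D (u j)⟫
      = (1 / (n : ℝ)) * (L * (L - (k + ((n : ℝ) * ε) • 1)⁻¹ * k * L)) i j :=
  conditional_covariance_gram_expression_general n hn w u k hk L hL ε hε R hR1 D hD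
end

section
/- Let U ∈ ℝ^{n×m₁}, V ∈ ℝ^{n×m₂}, λ > 0, and set k := U Uᵀ and L := V Vᵀ. Then for all vectors k_x, L_y ∈ ℝ^n, L_yᵀ (k_xᵀ ⊗ L)(k ⊗ L + nλ I_{n²})^{-1} vec(I_n) = (1/(nλ)) L_yᵀ ( L k_x − (k_xᵀ U ⊗ L V)(nλ I_{m₁m₂} + UᵀU ⊗ VᵀV)^{-1} vec(Vᵀ U) ), where k_xᵀ ⊗ L denotes the n × n² Kronecker product of the row vector k_xᵀ with L and k_xᵀ U ⊗ L V denotes the n × m₁m₂ Kronecker product of the row vector k_xᵀU with LV. -/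
open scoped BigOperators Kronecker
open Matrix

/-- `vecStack A` is the vectorization of the matrix `A` obtained by stacking its
columns: the entry of `vecStack A` at index `(j, i)` (column `j`, row `i`) is `A i j`. -/
def vecStack {m p : Type*} {α : Type*} (A : Matrix p m α) : m × p → α :=
  fun x => A x.2 x.1

/-- Woodbury-type push-through identity. -/
lemma woodbury_aux {p q : Type*} [Fintype p] [Fintype q] [DecidableEq p] [DecidableEq q]
    (W : Matrix p q ℝ) (c : ℝ) (hc : c ≠ 0)
    (hN : IsUnit (c • (1 : Matrix q q ℝ) + Wᵀ * W).det) :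
    (W * Wᵀ + c • 1)⁻¹ = c⁻¹ • (1 - W * (c • (1 : Matrix q q ℝ) + Wᵀ * W)⁻¹ * Wᵀ) := by
  apply Matrix.inv_eq_right_inv
  set M : Matrix q q ℝ := c • (1 : Matrix q q ℝ) + Wᵀ * W with hM
  have key : (W * Wᵀ + c • 1) * (W * M⁻¹ * Wᵀ) = W * Wᵀ := by
    have h1 : (W * Wᵀ + c • 1) * W = W * M := by
      rw [hM, Matrix.add_mul, Matrix.mul_add, Matrix.smul_mul, Matrix.mul_smul,
        Matrix.one_mul, Matrix.mul_one, Matrix.mul_assoc, add_comm]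
    calc (W * Wᵀ + c • 1) * (W * M⁻¹ * Wᵀ)
        = ((W * Wᵀ + c • 1) * W) * M⁻¹ * Wᵀ := by
          simp only [Matrix.mul_assoc]
      _ = W * (M * M⁻¹) * Wᵀ := by rw [h1]; simp only [Matrix.mul_assoc]
      _ = W * Wᵀ := by rw [Matrix.mul_nonsing_inv _ hN, Matrix.mul_one]
  rw [Matrix.mul_smul, Matrix.mul_sub, Matrix.mul_one, key, add_sub_cancel_left,
    smul_smul, inv_mul_cancel₀ hc, one_smul]

/-- With `k = UUᵀ`, `L = VVᵀ` and `λ > 0`, for all `k_x, L_y ∈ ℝⁿ`,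
`L_yᵀ (k_xᵀ ⊗ L)(k ⊗ L + nλ I_{n²})⁻¹ vec(Iₙ)
  = (1/(nλ)) L_yᵀ (L k_x − (k_xᵀU ⊗ LV)(nλ I_{m₁m₂} + UᵀU ⊗ VᵀV)⁻¹ vec(VᵀU))`. -/
theorem cholesky_reduced_preimage_expression
    (n m₁ m₂ : ℕ) (hn : 0 < n)
    (U : Matrix (Fin n) (Fin m₁) ℝ) (V : Matrix (Fin n) (Fin m₂) ℝ)
    (lam : ℝ) (hlam : 0 < lam)
    (kx Ly : Fin n → ℝ) :
    Ly ⬝ᵥ (Matrix.of fun (p : Fin n) (jq : Fin n × Fin n) =>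
          kx jq.1 * (V * Vᵀ) p jq.2).mulVec
        (((U * Uᵀ) ⊗ₖ (V * Vᵀ)
            + ((n : ℝ) * lam) • (1 : Matrix (Fin n × Fin n) (Fin n × Fin n) ℝ))⁻¹.mulVec
          (vecStack (1 : Matrix (Fin n) (Fin n) ℝ)))
      = (1 / ((n : ℝ) * lam)) *
          (Ly ⬝ᵥ ((V * Vᵀ).mulVec kx
            - (Matrix.of fun (p : Fin n) (ij : Fin m₁ × Fin m₂) =>
                  Uᵀ.mulVec kx ij.1 * (V * Vᵀ * V) p ij.2).mulVec
                ((((n : ℝ) * lam) • (1 : Matrix (Fin m₁ × Fin m₂) (Fin m₁ × Fin m₂) ℝ)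
                    + (Uᵀ * U) ⊗ₖ (Vᵀ * V))⁻¹.mulVec (vecStack (Vᵀ * U))))) := by
  set c : ℝ := (n : ℝ) * lam with hc
  have hc0 : 0 < c := mul_pos (by exact_mod_cast hn) hlam
  set W : Matrix (Fin n × Fin n) (Fin m₁ × Fin m₂) ℝ := U ⊗ₖ V with hW
  set N : Matrix (Fin m₁ × Fin m₂) (Fin m₁ × Fin m₂) ℝ :=
    c • 1 + (Uᵀ * U) ⊗ₖ (Vᵀ * V) with hN
  have hWtW : Wᵀ * W = (Uᵀ * U) ⊗ₖ (Vᵀ * V) := by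
    rw [hW, ← Matrix.kroneckerMap_transpose, ← Matrix.mul_kronecker_mul]
  have hKL : (U * Uᵀ) ⊗ₖ (V * Vᵀ) = W * Wᵀ := by
    rw [hW, ← Matrix.kroneckerMap_transpose, ← Matrix.mul_kronecker_mul]
  -- N is positive definite, hence has unit determinant
  have hNdet : IsUnit N.det := by
    have hpd : N.PosDef := by
      have h1 : (c • (1 : Matrix (Fin m₁ × Fin m₂) (Fin m₁ × Fin m₂) ℝ)).PosDef := by
        rw [Matrix.smul_one_eq_diagonal]
        exact Matrix.posDef_diagonal_iff.mpr fun _ => hc0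
      have h2 : ((Uᵀ * U) ⊗ₖ (Vᵀ * V)).PosSemidef := by
        rw [← hWtW, ← Matrix.conjTranspose_eq_transpose_of_trivial]
        exact Matrix.posSemidef_conjTranspose_mul_self W
      exact h1.add_posSemidef h2
    exact hpd.det_pos.ne'.isUnit
  have hNW : c • (1 : Matrix (Fin m₁ × Fin m₂) (Fin m₁ × Fin m₂) ℝ) + Wᵀ * W = N := by
    rw [hWtW]
  have hinv : ((U * Uᵀ) ⊗ₖ (V * Vᵀ) + c • (1 : Matrix (Fin n × Fin n) (Fin n × Fin n) ℝ))⁻¹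
      = c⁻¹ • (1 - W * N⁻¹ * Wᵀ) := by
    rw [hKL, woodbury_aux W c hc0.ne' (by rw [hNW]; exact hNdet), hNW]
  set L : Matrix (Fin n) (Fin n) ℝ := V * Vᵀ with hL
  set e : Fin n × Fin n → ℝ := vecStack (1 : Matrix (Fin n) (Fin n) ℝ) with he
  set A : Matrix (Fin n) (Fin n × Fin n) ℝ :=
    Matrix.of fun (p : Fin n) (jq : Fin n × Fin n) => kx jq.1 * L p jq.2 with hA
  set B : Matrix (Fin n) (Fin m₁ × Fin m₂) ℝ :=
    Matrix.of fun (p : Fin n) (ij : Fin m₁ × Fin m₂) =>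
      Uᵀ.mulVec kx ij.1 * (L * V) p ij.2 with hB
  have hAe : A.mulVec e = L.mulVec kx := by
    ext p
    simp [hA, he, Matrix.mulVec, dotProduct, vecStack, Fintype.sum_prod_type,
      Matrix.one_apply, mul_comm]
  have hWe : Wᵀ.mulVec e = vecStack (Vᵀ * U) := by
    ext ij
    simp [hW, he, Matrix.mulVec, dotProduct, vecStack, Fintype.sum_prod_type,
      Matrix.one_apply, Matrix.mul_apply, mul_comm]
  have hAW : A * W = B := by
    ext p ij
    simp only [hA, hB, hW, Matrix.mul_apply, Matrix.of_apply, Matrix.kroneckerMap_apply,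
      Fintype.sum_prod_type, Matrix.mulVec, dotProduct, Matrix.transpose_apply,
      Finset.sum_mul, Finset.mul_sum]
    conv_lhs => rw [Finset.sum_comm]
    exact Finset.sum_congr rfl fun a _ => Finset.sum_congr rfl fun b _ => by ring
  have hABv : ∀ v, A.mulVec (W.mulVec v) = B.mulVec v := fun v => by
    rw [Matrix.mulVec_mulVec, hAW]
  have hsplit : (W * N⁻¹ * Wᵀ).mulVec e = W.mulVec (N⁻¹.mulVec (Wᵀ.mulVec e)) := by
    simp only [Matrix.mulVec_mulVec, Matrix.mul_assoc]
  rw [hinv, Matrix.smul_mulVec, Matrix.mulVec_smul, dotProduct_smul,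
    Matrix.sub_mulVec, Matrix.one_mulVec, Matrix.mulVec_sub, hAe, hsplit, hWe,
    hABv, smul_eq_mul, one_div]
end
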